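/- For every (A,A)-bimodule M one has Diag(M) = Diag(M_Z), i.e. the canonical projection p_Z: M → M_Z = M/[Z(A),M] induces an isomorphism Diag(M) ≅ Diag(M_Z); consequently, if M and N are central bimodules then Diag(M ⊗_K N) = Diag(M ⊗_{Z(A)} N). -/

import Mathlib

/-!
`Diag(P)` only sees `P` through the bimodule maps `P → A`. Hence a surjection `f : P → Q` along
which every such map factors identifies `Diag(P)` with `Diag(Q)`: precomposition with `f` maps
`A^{Hom(P,A)}` injectively to `A^{Hom(Q,A)}` and carries `c_P` to `c_Q ∘ f`.
Both `M → M_Z` and `M ⊗_K N → M ⊗_{Z(A)} N` are such surjections. Every `ω : M → A` kills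
`z•m - m•z` because `z` is central in `A`; and when `N` is central every `ω : M ⊗_K N → A` is
`Z(A)`-balanced: `ω(zm ⊗ n) = z ω(m ⊗ n) = ω(m ⊗ n) z = ω(m ⊗ nz) = ω(m ⊗ zn)`.
-/

set_option maxHeartbeats 1000000
set_option synthInstance.maxHeartbeats 400000

open TensorProduct MulOpposite

section TensorEndHoms
variable (R : Type*) [CommRing R]
variable (M N : Type*) [AddCommGroup M] [AddCommGroup N] [Module R M] [Module R N]

noncomputable def lTensorRingHom : Module.End R N →+* Module.End R (M ⊗[R] N) where
  toFun f := f.lTensor M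
  map_one' := LinearMap.lTensor_id M N
  map_mul' f g := LinearMap.lTensor_mul M f g
  map_zero' := LinearMap.lTensor_zero M
  map_add' f g := LinearMap.lTensor_add M f g

noncomputable def rTensorRingHom : Module.End R M →+* Module.End R (M ⊗[R] N) where
  toFun f := f.rTensor N
  map_one' := LinearMap.rTensor_id N M
  map_mul' f g := LinearMap.rTensor_mul N f g
  map_zero' := LinearMap.rTensor_zero N
  map_add' f g := LinearMap.rTensor_add N f g

end TensorEndHoms

section RestrictEnd
variable (R S M : Type*) [CommRing R] [CommRing S] [AddCommGroup M]
  [Module R M] [Module S M] [LinearMap.CompatibleSMul M M R S]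

noncomputable def endRestrictScalars : Module.End S M →+* Module.End R M where
  toFun f := f.restrictScalars R
  map_one' := rfl
  map_mul' f g := rfl
  map_zero' := rfl
  map_add' f g := rfl
end RestrictEnd

section Bimodule
variable (K A : Type*) [CommRing K] [Ring A] [Algebra K A]
variable (M N : Type*)
  [AddCommGroup M] [Module (A ⊗[K] Aᵐᵒᵖ) M] [Module (Subring.center A) M]
  [AddCommGroup N] [Module (A ⊗[K] Aᵐᵒᵖ) N] [Module (Subring.center A) N]

noncomputable def phiL [SMulCommClass (A ⊗[K] Aᵐᵒᵖ) (Subring.center A) M] :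
    A →+* Module.End (Subring.center A) (M ⊗[Subring.center A] N) :=
  (rTensorRingHom (Subring.center A) M N).comp
    ((Module.toModuleEnd (Subring.center A) M).comp
      (Algebra.TensorProduct.includeLeftRingHom : A →+* A ⊗[K] Aᵐᵒᵖ))

noncomputable def phiR [SMulCommClass (A ⊗[K] Aᵐᵒᵖ) (Subring.center A) N] :
    Aᵐᵒᵖ →+* Module.End (Subring.center A) (M ⊗[Subring.center A] N) :=
  (lTensorRingHom (Subring.center A) M N).comp
    ((Module.toModuleEnd (Subring.center A) N).comp
      ((Algebra.TensorProduct.includeRight : Aᵐᵒᵖ →ₐ[K] A ⊗[K] Aᵐᵒᵖ) :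
        Aᵐᵒᵖ →+* A ⊗[K] Aᵐᵒᵖ))


end Bimodule

section Assemble
variable (K A : Type*) [CommRing K] [Ring A] [Algebra K A]

theorem tmul_one_mem_center' {z : A} (hz : z ∈ Set.center A) :
    (z ⊗ₜ[K] (1 : Aᵐᵒᵖ)) ∈ Set.center (A ⊗[K] Aᵐᵒᵖ) := by
  rw [Semigroup.mem_center_iff]
  intro g
  induction g using TensorProduct.induction_on with
  | zero => simp
  | tmul a b =>
      have hza : a * z = z * a := by
        first
          | exact (hz.comm a).symm
          | exact hz.comm a
          | exact (hz.comm a).eq.symm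
          | exact (hz.comm a).eq
      simp [Algebra.TensorProduct.tmul_mul_tmul, hza]
  | add x y hx hy => simp [add_mul, mul_add, hx, hy]

def algebraMapCenter : K →+* Subring.center A where
  toFun k := ⟨algebraMap K A k, by
    rw [Subring.mem_center_iff]; intro g; exact (Algebra.commutes k g).symm⟩
  map_one' := by ext; simp
  map_mul' x y := by ext; simp
  map_zero' := by ext; simp
  map_add' x y := by ext; simp

variable (M N : Type*)
  [AddCommGroup M] [Module (A ⊗[K] Aᵐᵒᵖ) M] [Module (Subring.center A) M]
  [AddCommGroup N] [Module (A ⊗[K] Aᵐᵒᵖ) N] [Module (Subring.center A) N]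

/-- The bimodule structure on `M ⊗[Z(A)] N` with `a • (m ⊗ n) • b = (a • m) ⊗ (n • b)`. -/
noncomputable def tensorBimoduleZ
    (hM : ∀ (z : Subring.center A) (m : M), z • m = ((z : A) ⊗ₜ[K] (1 : Aᵐᵒᵖ)) • m)
    (hN : ∀ (z : Subring.center A) (n : N), z • n = ((z : A) ⊗ₜ[K] (1 : Aᵐᵒᵖ)) • n) :
    Module (A ⊗[K] Aᵐᵒᵖ) (M ⊗[Subring.center A] N) :=
  haveI hCM : SMulCommClass (A ⊗[K] Aᵐᵒᵖ) (Subring.center A) M := ⟨fun b z m => by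
    rw [hM z, hM z, ← mul_smul, ← mul_smul, (tmul_one_mem_center' K A z.2).comm b]⟩
  haveI hCN : SMulCommClass (A ⊗[K] Aᵐᵒᵖ) (Subring.center A) N := ⟨fun b z n => by
    rw [hN z, hN z, ← mul_smul, ← mul_smul, (tmul_one_mem_center' K A z.2).comm b]⟩
  letI modK : Module K (M ⊗[Subring.center A] N) :=
    Module.compHom _ (algebraMapCenter K A)
  haveI hcompat : LinearMap.CompatibleSMul (M ⊗[Subring.center A] N)
      (M ⊗[Subring.center A] N) K (Subring.center A) :=
    ⟨fun f k x => f.map_smul (algebraMapCenter K A k) x⟩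
  haveI hscc : SMulCommClass K K (M ⊗[Subring.center A] N) :=
    ⟨fun a b x => by rw [smul_smul, smul_smul, mul_comm]⟩
  haveI hist : IsScalarTower K K (M ⊗[Subring.center A] N) :=
    ⟨fun a b x => by rw [smul_eq_mul, ← smul_smul]⟩
  letI αL : A →ₐ[K] Module.End K (M ⊗[Subring.center A] N) :=
    { toRingHom := (endRestrictScalars K (Subring.center A) _).comp (phiL K A M N)
      commutes' := fun k => by
        apply LinearMap.ext
        intro x
        induction x using TensorProduct.induction_on with
        | zero => simp
        | tmul m n =>
            simp only [OneHom.toFun_eq_coe, MonoidHom.toFun_eq_coe, RingHom.toFun_eq_coe]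
            show ((algebraMap K A k ⊗ₜ[K] (1 : Aᵐᵒᵖ)) • m) ⊗ₜ[Subring.center A] n
              = ((algebraMapCenter K A k) • m) ⊗ₜ[Subring.center A] n
            rw [hM (algebraMapCenter K A k) m]
            rfl
        | add x y hx hy => simp only [map_add, hx, hy] }
  letI αR : Aᵐᵒᵖ →ₐ[K] Module.End K (M ⊗[Subring.center A] N) :=
    { toRingHom := (endRestrictScalars K (Subring.center A) _).comp (phiR K A M N)
      commutes' := fun k => by
        apply LinearMap.ext
        intro x
        induction x using TensorProduct.induction_on with
        | zero => simp
        | tmul m n =>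
            simp only [OneHom.toFun_eq_coe, MonoidHom.toFun_eq_coe, RingHom.toFun_eq_coe]
            show m ⊗ₜ[Subring.center A] ((((1 : A) ⊗ₜ[K] (algebraMap K Aᵐᵒᵖ k)) :
                A ⊗[K] Aᵐᵒᵖ) • n)
              = ((algebraMapCenter K A k) • m) ⊗ₜ[Subring.center A] n
            rw [show (((1 : A) ⊗ₜ[K] (algebraMap K Aᵐᵒᵖ k)) : A ⊗[K] Aᵐᵒᵖ)
                  = ((algebraMapCenter K A k : Subring.center A) : A) ⊗ₜ[K] (1 : Aᵐᵒᵖ) by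
                rw [Algebra.algebraMap_eq_smul_one, tmul_smul, smul_tmul',
                  ← Algebra.algebraMap_eq_smul_one]
                rfl]
            rw [← hN (algebraMapCenter K A k) n]
            exact (smul_tmul (algebraMapCenter K A k) m n).symm
        | add x y hx hy => simp only [map_add, hx, hy] }
  Module.compHom _ (Algebra.TensorProduct.lift αL αR (fun a b => by
    apply LinearMap.ext
    intro x
    induction x using TensorProduct.induction_on with
    | zero => simp
    | tmul m n => rfl
    | add x y hx hy =>
        show (αL a * αR b) (x + y) = (αR b * αL a) (x + y)
        rw [map_add, map_add, hx, hy])).toRingHom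

end Assemble


section RightTensor
variable (R : Type*) [CommRing R] (S : Type*) [Ring S]
variable (M N : Type*) [AddCommGroup M] [AddCommGroup N] [Module R M] [Module R N]
variable [Module S N] [SMulCommClass S R N]

noncomputable def rightFactorEnd : S →+* Module.End R (M ⊗[R] N) where
  toFun s := (Module.toModuleEnd R N s).lTensor M
  map_one' := by
    show (Module.toModuleEnd R N (1 : S)).lTensor M = 1
    rw [map_one]; exact LinearMap.lTensor_id M N
  map_mul' s t := by
    show (Module.toModuleEnd R N (s * t)).lTensor M = _
    rw [map_mul]; exact LinearMap.lTensor_mul M _ _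
  map_zero' := by
    show (Module.toModuleEnd R N (0 : S)).lTensor M = 0
    rw [map_zero]; exact LinearMap.lTensor_zero M
  map_add' s t := by
    show (Module.toModuleEnd R N (s + t)).lTensor M = _
    rw [map_add]; exact LinearMap.lTensor_add M _ _

noncomputable def rightFactorModule : Module S (M ⊗[R] N) :=
  Module.compHom _ (rightFactorEnd R S M N)

end RightTensor

section Bimodule

variable (K A : Type*) [CommRing K] [Ring A] [Algebra K A]

noncomputable def leftAct (M : Type*) [AddCommGroup M] [Module (A ⊗[K] Aᵐᵒᵖ) M] :
    Module A M :=
  Module.compHom M (Algebra.TensorProduct.includeLeftRingHom : A →+* A ⊗[K] Aᵐᵒᵖ)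

noncomputable def rightAct (M : Type*) [AddCommGroup M] [Module (A ⊗[K] Aᵐᵒᵖ) M] :
    Module Aᵐᵒᵖ M :=
  Module.compHom M ((Algebra.TensorProduct.includeRight : Aᵐᵒᵖ →ₐ[K] A ⊗[K] Aᵐᵒᵖ) : Aᵐᵒᵖ →+* A ⊗[K] Aᵐᵒᵖ)

variable (M N : Type*)
  [AddCommGroup M] [Module (A ⊗[K] Aᵐᵒᵖ) M] [Module K M] [IsScalarTower K (A ⊗[K] Aᵐᵒᵖ) M]
  [AddCommGroup N] [Module (A ⊗[K] Aᵐᵒᵖ) N] [Module K N] [IsScalarTower K (A ⊗[K] Aᵐᵒᵖ) N]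

/-- The bimodule structure on `M ⊗[K] N` given by `a • (m ⊗ n) • b = (a • m) ⊗ (n • b)`. -/
noncomputable def tensorBimoduleK : Module (A ⊗[K] Aᵐᵒᵖ) (M ⊗[K] N) :=
  letI mA : Module A M := leftAct K A M
  letI nOp : Module Aᵐᵒᵖ N := rightAct K A N
  haveI h1 : SMulCommClass K A M :=
    ⟨fun k a m => smul_comm k (a ⊗ₜ[K] (1 : Aᵐᵒᵖ)) m⟩
  haveI h2 : SMulCommClass Aᵐᵒᵖ K N :=
    ⟨fun b k n => (smul_comm k ((1 : A) ⊗ₜ[K] b) n).symm⟩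
  letI mod_left : Module A (M ⊗[K] N) := TensorProduct.leftModule
  letI mod_right : Module Aᵐᵒᵖ (M ⊗[K] N) := rightFactorModule K Aᵐᵒᵖ M N
  haveI tower_left : IsScalarTower K A (M ⊗[K] N) := ⟨fun k a x => by
    induction x using TensorProduct.induction_on with
    | zero => simp
    | tmul m n =>
        show ((k • a) • m) ⊗ₜ[K] n = k • ((a • m) ⊗ₜ[K] n)
        have h : ((k • a) • m : M) = k • (a • m) := by
          show ((k • a) ⊗ₜ[K] (1 : Aᵐᵒᵖ)) • m = k • ((a ⊗ₜ[K] (1 : Aᵐᵒᵖ)) • m)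
          rw [← smul_assoc, smul_tmul']
        rw [h]
        exact (smul_tmul' k (a • m) n).symm
    | add x y hx hy => simp only [smul_add, hx, hy]⟩
  haveI tower_right : IsScalarTower K Aᵐᵒᵖ (M ⊗[K] N) := ⟨fun k b x => by
    induction x using TensorProduct.induction_on with
    | zero => simp
    | tmul m n =>
        show m ⊗ₜ[K] ((k • b) • n) = k • (m ⊗ₜ[K] (b • n))
        have h : ((k • b) • n : N) = k • (b • n) := by
          show ((1 : A) ⊗ₜ[K] (k • b)) • n = k • (((1 : A) ⊗ₜ[K] b) • n)
          rw [show ((1 : A) ⊗ₜ[K] (k • b) : A ⊗[K] Aᵐᵒᵖ) = k • ((1 : A) ⊗ₜ[K] b) from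
                tmul_smul k (1 : A) b,
              smul_assoc]
        rw [h]
        exact tmul_smul (R := K) k m (b • n)
    | add x y hx hy => simp only [smul_add, hx, hy]⟩
  haveI comm : SMulCommClass A Aᵐᵒᵖ (M ⊗[K] N) := ⟨fun a b x => by
    induction x using TensorProduct.induction_on with
    | zero => simp
    | tmul m n =>
        show a • (m ⊗ₜ[K] (b • n)) = b • ((a • m) ⊗ₜ[K] n)
        rw [smul_tmul']
        rfl
    | add x y hx hy => simp only [smul_add, hx, hy]⟩
  TensorProduct.Algebra.module

end Bimodule




section Statement
variable (K A : Type*) [CommRing K] [Ring A] [Algebra K A]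

/-- A bimodule (i.e. a module over `A ⊗[K] Aᵐᵒᵖ`) is *central* if every element of the
center of `A` acts the same way on the left and on the right. -/
def IsCentralBimodule (M : Type*) [AddCommGroup M] [Module (A ⊗[K] Aᵐᵒᵖ) M] : Prop :=
  ∀ z ∈ Set.center A, ∀ m : M, (z ⊗ₜ[K] (1 : Aᵐᵒᵖ)) • m = ((1 : A) ⊗ₜ[K] (op z)) • m

/-- `[Z(A), M]`: the sub-bimodule of `M` generated by the elements `z•m - m•z`. -/
def centerCommutator (M : Type*) [AddCommGroup M] [Module (A ⊗[K] Aᵐᵒᵖ) M] :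
    Submodule (A ⊗[K] Aᵐᵒᵖ) M :=
  Submodule.span _ {x : M | ∃ z ∈ Set.center A, ∃ m : M,
    x = (z ⊗ₜ[K] (1 : Aᵐᵒᵖ)) • m - ((1 : A) ⊗ₜ[K] (op z)) • m}

/-- `A` as a bimodule over itself. -/
noncomputable def bimoduleBA : Module (A ⊗[K] Aᵐᵒᵖ) A := TensorProduct.Algebra.module

attribute [local instance] bimoduleBA

variable (M : Type*) [AddCommGroup M] [Module (A ⊗[K] Aᵐᵒᵖ) M]

/-- The canonical bimodule homomorphism `c : M → A^{Hom(M,A)}`, `c m = (ω m)_ω`. -/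
noncomputable def cMap : M →ₗ[A ⊗[K] Aᵐᵒᵖ] ((M →ₗ[A ⊗[K] Aᵐᵒᵖ] A) → A) :=
  LinearMap.pi fun ω => ω

/-- `Diag(M)`: the image of the canonical map `c : M → A^{Hom(M,A)}`. -/
noncomputable def diagSub : Submodule (A ⊗[K] Aᵐᵒᵖ) ((M →ₗ[A ⊗[K] Aᵐᵒᵖ] A) → A) :=
  LinearMap.range (cMap K A M)

section Diag
variable {P Q : Type*} [AddCommGroup P] [Module (A ⊗[K] Aᵐᵒᵖ) P]
  [AddCommGroup Q] [Module (A ⊗[K] Aᵐᵒᵖ) Q]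

theorem bimoduleBA_tmul_smul (a : A) (b : Aᵐᵒᵖ) (x : A) :
    (a ⊗ₜ[K] b) • x = a * x * unop b :=
  (mul_assoc a x (unop b)).symm

noncomputable def diagPrecomp (f : P →ₗ[A ⊗[K] Aᵐᵒᵖ] Q) :
    ((P →ₗ[A ⊗[K] Aᵐᵒᵖ] A) → A) →ₗ[A ⊗[K] Aᵐᵒᵖ] ((Q →ₗ[A ⊗[K] Aᵐᵒᵖ] A) → A) :=
  LinearMap.funLeft _ A fun ω => ω ∘ₗ f

theorem diagPrecomp_comp_cMap (f : P →ₗ[A ⊗[K] Aᵐᵒᵖ] Q) :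
    diagPrecomp K A f ∘ₗ cMap K A P = cMap K A Q ∘ₗ f :=
  rfl

theorem map_diagSub_diagPrecomp {f : P →ₗ[A ⊗[K] Aᵐᵒᵖ] Q} (hf : Function.Surjective f) :
    (diagSub K A P).map (diagPrecomp K A f) = diagSub K A Q := by
  rw [diagSub, diagSub, ← LinearMap.range_comp, diagPrecomp_comp_cMap,
    LinearMap.range_comp_of_range_eq_top _ (LinearMap.range_eq_top.2 hf)]

/-- Since every bimodule map `P → A` factors through `f`, precomposition with `f` is injective
on all of `A^{Hom(P,A)}`, not only on `Diag(P)`. -/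
noncomputable def diagSubEquiv (f : P →ₗ[A ⊗[K] Aᵐᵒᵖ] Q) (hf : Function.Surjective f)
    (hfactor : Function.Surjective fun ω : Q →ₗ[A ⊗[K] Aᵐᵒᵖ] A => ω ∘ₗ f) :
    diagSub K A P ≃ₗ[A ⊗[K] Aᵐᵒᵖ] diagSub K A Q :=
  ((diagSub K A P).equivMapOfInjective _
    (LinearMap.funLeft_injective_of_surjective _ _ _ hfactor)).trans
    (LinearEquiv.ofEq _ _ (map_diagSub_diagPrecomp K A hf))

theorem diagSubEquiv_rangeRestrict (f : P →ₗ[A ⊗[K] Aᵐᵒᵖ] Q) (hf : Function.Surjective f)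
    (hfactor : Function.Surjective fun ω : Q →ₗ[A ⊗[K] Aᵐᵒᵖ] A => ω ∘ₗ f) (p : P) :
    diagSubEquiv K A f hf hfactor ((cMap K A P).rangeRestrict p)
      = (cMap K A Q).rangeRestrict (f p) :=
  rfl

theorem centerCommutator_le_ker (ω : P →ₗ[A ⊗[K] Aᵐᵒᵖ] A) :
    centerCommutator K A P ≤ LinearMap.ker ω := by
  rw [centerCommutator, Submodule.span_le]
  rintro x ⟨z, hz, p, rfl⟩
  simp only [SetLike.mem_coe, LinearMap.mem_ker, map_sub, map_smul, bimoduleBA_tmul_smul,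
    unop_one, unop_op, mul_one, one_mul, sub_eq_zero]
  exact hz.comm (ω p)

theorem surjective_comp_centerCommutator_mkQ :
    Function.Surjective fun ω : (P ⧸ centerCommutator K A P) →ₗ[A ⊗[K] Aᵐᵒᵖ] A =>
      ω ∘ₗ (centerCommutator K A P).mkQ :=
  fun ω => ⟨(centerCommutator K A P).liftQ ω (centerCommutator_le_ker K A ω),
    (centerCommutator K A P).liftQ_mkQ ω _⟩

end Diag

section TensorProductLift
variable {R S M N P : Type*} [CommRing R] [CommRing S] [AddCommGroup M] [AddCommGroup N]
  [AddCommGroup P] [Module R M] [Module R N] [Module S M] [Module S N]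

noncomputable def TensorProduct.liftAddHomOfBalanced (g : M ⊗[R] N →+ P)
    (hg : ∀ (s : S) (m : M) (n : N), g ((s • m) ⊗ₜ n) = g (m ⊗ₜ (s • n))) :
    M ⊗[S] N →+ P :=
  liftAddHom ((AddMonoidHom.compHom g).comp
    (LinearMap.toAddMonoidHom'.comp (TensorProduct.mk R M N).toAddMonoidHom)) hg

theorem map_smul_of_map_tmul_smul_tmul [Module (A ⊗[K] Aᵐᵒᵖ) (M ⊗[R] N)]
    [Module (A ⊗[K] Aᵐᵒᵖ) P] (φ : M ⊗[R] N →+ P)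
    (h : ∀ (a : A) (b : Aᵐᵒᵖ) (m : M) (n : N),
      φ ((a ⊗ₜ[K] b) • (m ⊗ₜ[R] n)) = (a ⊗ₜ[K] b) • φ (m ⊗ₜ n))
    (r : A ⊗[K] Aᵐᵒᵖ) (x : M ⊗[R] N) : φ (r • x) = r • φ x := by
  induction r using TensorProduct.induction_on with
  | zero => rw [zero_smul (A ⊗[K] Aᵐᵒᵖ) x, map_zero, zero_smul (A ⊗[K] Aᵐᵒᵖ) (φ x)]
  | add r s hr hs => simp only [add_smul, map_add, hr, hs]
  | tmul a b =>
    induction x using TensorProduct.induction_on with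
    | zero => simp only [smul_zero, map_zero]
    | add x y hx hy => simp only [smul_add, map_add, hx, hy]
    | tmul m n => exact h a b m n

end TensorProductLift

def IsCenterSMulLeft (M : Type*) [AddCommGroup M] [Module (A ⊗[K] Aᵐᵒᵖ) M]
    [Module (Subring.center A) M] : Prop :=
  ∀ (z : Subring.center A) (m : M), z • m = ((z : A) ⊗ₜ[K] (1 : Aᵐᵒᵖ)) • m

section CenterBaseChange
variable {M N : Type*} [AddCommGroup M] [Module (A ⊗[K] Aᵐᵒᵖ) M] [Module K M]
  [IsScalarTower K (A ⊗[K] Aᵐᵒᵖ) M]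
  [AddCommGroup N] [Module (A ⊗[K] Aᵐᵒᵖ) N] [Module K N] [IsScalarTower K (A ⊗[K] Aᵐᵒᵖ) N]

theorem map_tmul_smul_tmul
    (ω : letI := tensorBimoduleK K A M N; M ⊗[K] N →ₗ[A ⊗[K] Aᵐᵒᵖ] A)
    (a : A) (b : Aᵐᵒᵖ) (m : M) (n : N) :
    ω (((a ⊗ₜ[K] (1 : Aᵐᵒᵖ)) • m) ⊗ₜ[K] (((1 : A) ⊗ₜ[K] b) • n)) = a * ω (m ⊗ₜ n) * unop b :=
  letI := tensorBimoduleK K A M N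
  (ω.map_smul (a ⊗ₜ b) (m ⊗ₜ n)).trans (bimoduleBA_tmul_smul K A a b _)

theorem map_tmul_smul_left (ω : letI := tensorBimoduleK K A M N; M ⊗[K] N →ₗ[A ⊗[K] Aᵐᵒᵖ] A)
    (a : A) (m : M) (n : N) :
    ω (((a ⊗ₜ[K] (1 : Aᵐᵒᵖ)) • m) ⊗ₜ[K] n) = a * ω (m ⊗ₜ n) := by
  simpa only [← Algebra.TensorProduct.one_def, one_smul, unop_one, mul_one]
    using map_tmul_smul_tmul K A ω a 1 m n

theorem map_tmul_smul_right (ω : letI := tensorBimoduleK K A M N; M ⊗[K] N →ₗ[A ⊗[K] Aᵐᵒᵖ] A)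
    (b : Aᵐᵒᵖ) (m : M) (n : N) :
    ω (m ⊗ₜ[K] (((1 : A) ⊗ₜ[K] b) • n)) = ω (m ⊗ₜ n) * unop b := by
  simpa only [← Algebra.TensorProduct.one_def, one_smul, one_mul]
    using map_tmul_smul_tmul K A ω 1 b m n

variable [Module (Subring.center A) M] [Module (Subring.center A) N]

theorem smul_eq_algebraMapCenter_smul (hM : IsCenterSMulLeft K A M) (k : K) (m : M) :
    k • m = algebraMapCenter K A k • m := by
  rw [hM, ← IsScalarTower.algebraMap_smul (A ⊗[K] Aᵐᵒᵖ) k m,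
    Algebra.TensorProduct.algebraMap_apply]
  rfl

theorem map_center_smul_tmul (hM : IsCenterSMulLeft K A M) (hN : IsCenterSMulLeft K A N)
    (hNc : IsCentralBimodule K A N)
    (ω : letI := tensorBimoduleK K A M N; M ⊗[K] N →ₗ[A ⊗[K] Aᵐᵒᵖ] A)
    (z : Subring.center A) (m : M) (n : N) : ω ((z • m) ⊗ₜ n) = ω (m ⊗ₜ (z • n)) := by
  rw [hM, hN, hNc z z.2, map_tmul_smul_left, map_tmul_smul_right, unop_op]
  exact z.2.comm _

variable (hM : IsCenterSMulLeft K A M) (hN : IsCenterSMulLeft K A N)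

noncomputable def tensorCenterProj :
    letI := tensorBimoduleK K A M N
    letI := tensorBimoduleZ K A M N hM hN
    M ⊗[K] N →ₗ[A ⊗[K] Aᵐᵒᵖ] M ⊗[Subring.center A] N :=
  letI := tensorBimoduleK K A M N
  letI := tensorBimoduleZ K A M N hM hN
  let π : M ⊗[K] N →+ M ⊗[Subring.center A] N :=
    TensorProduct.liftAddHomOfBalanced (AddMonoidHom.id _) fun k m n => by
      rw [AddMonoidHom.id_apply, AddMonoidHom.id_apply, smul_eq_algebraMapCenter_smul K A hM,
        smul_eq_algebraMapCenter_smul K A hN, smul_tmul]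
  { π with map_smul' := map_smul_of_map_tmul_smul_tmul K A π fun _ _ _ _ => rfl }

theorem tensorCenterProj_surjective : Function.Surjective (tensorCenterProj K A hM hN) := by
  intro y
  induction y using TensorProduct.induction_on with
  | zero => exact ⟨0, map_zero _⟩
  | tmul m n => exact ⟨m ⊗ₜ n, rfl⟩
  | add x y hx hy =>
    obtain ⟨x, rfl⟩ := hx
    obtain ⟨y, rfl⟩ := hy
    exact ⟨x + y, map_add _ x y⟩

noncomputable def tensorCenterLift (hNc : IsCentralBimodule K A N)
    (ω : letI := tensorBimoduleK K A M N; M ⊗[K] N →ₗ[A ⊗[K] Aᵐᵒᵖ] A) :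
    letI := tensorBimoduleZ K A M N hM hN
    M ⊗[Subring.center A] N →ₗ[A ⊗[K] Aᵐᵒᵖ] A :=
  letI := tensorBimoduleK K A M N
  letI := tensorBimoduleZ K A M N hM hN
  let ω' : M ⊗[Subring.center A] N →+ A :=
    TensorProduct.liftAddHomOfBalanced ω.toAddMonoidHom (map_center_smul_tmul K A hM hN hNc ω)
  { ω' with map_smul' := map_smul_of_map_tmul_smul_tmul K A ω' fun a b m n =>
      ω.map_smul (a ⊗ₜ b) (m ⊗ₜ n) }

theorem surjective_comp_tensorCenterProj (hNc : IsCentralBimodule K A N) :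
    letI := tensorBimoduleK K A M N
    letI := tensorBimoduleZ K A M N hM hN
    Function.Surjective fun ω : M ⊗[Subring.center A] N →ₗ[A ⊗[K] Aᵐᵒᵖ] A =>
      ω ∘ₗ tensorCenterProj K A hM hN := by
  let := tensorBimoduleK K A M N
  let := tensorBimoduleZ K A M N hM hN
  intro ω
  refine ⟨tensorCenterLift K A hM hN hNc ω, LinearMap.ext fun x => ?_⟩
  induction x using TensorProduct.induction_on with
  | zero => simp only [map_zero]
  | tmul m n => rfl
  | add x y hx hy => simp only [map_add, hx, hy]

end CenterBaseChange

/-- For every bimodule `M` one has `Diag(M) = Diag(M_Z)`: the canonical projection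
`p_Z : M → M_Z = M/[Z(A),M]` induces an isomorphism `Diag(M) ≅ Diag(M_Z)`;
consequently, if `M` and `N` are central bimodules, then
`Diag(M ⊗[K] N) = Diag(M ⊗[Z(A)] N)`. -/
theorem diag_eq_diag_centerQuotient :
    (∀ (M : Type*) [AddCommGroup M] [Module (A ⊗[K] Aᵐᵒᵖ) M],
      ∃ e : (diagSub K A M) ≃ₗ[A ⊗[K] Aᵐᵒᵖ]
          (diagSub K A (M ⧸ centerCommutator K A M)),
        ∀ m : M,
          e ((cMap K A M).rangeRestrict m)
            = (cMap K A (M ⧸ centerCommutator K A M)).rangeRestrict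
                ((centerCommutator K A M).mkQ m)) ∧
    (∀ (M N : Type*) [AddCommGroup M] [Module (A ⊗[K] Aᵐᵒᵖ) M] [Module K M]
        [IsScalarTower K (A ⊗[K] Aᵐᵒᵖ) M] [Module (Subring.center A) M]
        [AddCommGroup N] [Module (A ⊗[K] Aᵐᵒᵖ) N] [Module K N]
        [IsScalarTower K (A ⊗[K] Aᵐᵒᵖ) N] [Module (Subring.center A) N]
        (hM : ∀ (z : Subring.center A) (m : M), z • m = ((z : A) ⊗ₜ[K] (1 : Aᵐᵒᵖ)) • m)
        (hN : ∀ (z : Subring.center A) (n : N), z • n = ((z : A) ⊗ₜ[K] (1 : Aᵐᵒᵖ)) • n),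
      IsCentralBimodule K A M → IsCentralBimodule K A N →
        letI : Module (A ⊗[K] Aᵐᵒᵖ) (M ⊗[K] N) := tensorBimoduleK K A M N
        letI : Module (A ⊗[K] Aᵐᵒᵖ) (M ⊗[Subring.center A] N) :=
          tensorBimoduleZ K A M N hM hN
        ∃ e : (diagSub K A (M ⊗[K] N)) ≃ₗ[A ⊗[K] Aᵐᵒᵖ]
            (diagSub K A (M ⊗[Subring.center A] N)),
          ∀ (m : M) (n : N),
            e ((cMap K A (M ⊗[K] N)).rangeRestrict (m ⊗ₜ[K] n))
              = (cMap K A (M ⊗[Subring.center A] N)).rangeRestrict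
                  (m ⊗ₜ[Subring.center A] n)) := by
  constructor
  · intro M _ _
    exact ⟨diagSubEquiv K A _ (Submodule.mkQ_surjective _)
      (surjective_comp_centerCommutator_mkQ K A), diagSubEquiv_rangeRestrict K A _ _ _⟩
  · intro M N _ _ _ _ _ _ _ _ _ _ hM hN _ hNc
    let := tensorBimoduleK K A M N
    let := tensorBimoduleZ K A M N hM hN
    exact ⟨diagSubEquiv K A _ (tensorCenterProj_surjective K A hM hN)
      (surjective_comp_tensorCenterProj K A hM hN hNc),
      fun m n => diagSubEquiv_rangeRestrict K A _ _ _ (m ⊗ₜ n)⟩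

end Statement
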